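/- If every branch produced by the splitting rule for X·u = a·v is unsatisfiable — namely (i) u = a·v with X ↦ ε is unsatisfiable and (ii) the equation obtained by substituting a·X for X, i.e. X'·u[X ↦ a·X'] = v[X ↦ a·X'], is unsatisfiable — then X·u = a·v is unsatisfiable. -/

import Mathlib

/-- Extension of an assignment `h : Γ → Σ*` to terms (lists over `Σ ⊕ Γ`). -/
def applyH {S G : Type*} (h : G → List S) (t : List (S ⊕ G)) : List S :=
  t.flatMap (Sum.elim (fun a => [a]) h)

/-- Substitute the term `s` for every occurrence of the variable `X` in `t`. -/
def substVar {S G : Type*} [DecidableEq S] [DecidableEq G]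
    (X : G) (s : List (S ⊕ G)) (t : List (S ⊕ G)) : List (S ⊕ G) :=
  t.flatMap (fun c => if c = Sum.inr X then s else [c])

/-! A solution `h` of `X·u = a·v` either sends `X` to `ε`, and then solves branch (i), or sends
`X` to `a·w`, and then `h[X ↦ w]` solves branch (ii), since substituting `a·X` for `X` undoes the
update. -/

section Assignment

variable {S G : Type*} (h : G → List S)

@[simp]
lemma applyH_nil : applyH h [] = [] := rfl

@[simp]
lemma applyH_cons_inl (a : S) (t : List (S ⊕ G)) :
    applyH h (Sum.inl a :: t) = a :: applyH h t := rfl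

@[simp]
lemma applyH_cons_inr (Y : G) (t : List (S ⊕ G)) :
    applyH h (Sum.inr Y :: t) = h Y ++ applyH h t := rfl

lemma applyH_append (t₁ t₂ : List (S ⊕ G)) :
    applyH h (t₁ ++ t₂) = applyH h t₁ ++ applyH h t₂ :=
  List.flatMap_append

variable [DecidableEq S] [DecidableEq G]

lemma applyH_substVar (X : G) (s t : List (S ⊕ G)) :
    applyH h (substVar X s t) = applyH (Function.update h X (applyH h s)) t := by
  induction t with
  | nil => rfl
  | cons c t ih =>
    have hc : substVar X s (c :: t) = (if c = Sum.inr X then s else [c]) ++ substVar X s t :=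
      List.flatMap_cons
    rw [hc, applyH_append, ih]
    rcases c with b | Y
    · simp
    · by_cases hY : Y = X <;> simp [hY]

lemma applyH_substVar_of_eq {X : G} {s : List (S ⊕ G)} (hX : h X = applyH h s)
    (t : List (S ⊕ G)) : applyH h (substVar X s t) = applyH h t := by
  rw [applyH_substVar, ← hX, Function.update_eq_self]

lemma applyH_update_substVar {X : G} {w : List S} {s : List (S ⊕ G)}
    (hX : h X = applyH (Function.update h X w) s) (t : List (S ⊕ G)) :
    applyH (Function.update h X w) (substVar X s t) = applyH h t := by
  rw [applyH_substVar, ← hX, Function.update_idem, Function.update_eq_self]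

end Assignment

theorem stmt11 {S G : Type*} [DecidableEq S] [DecidableEq G]
    (X : G) (a : S) (u v : List (S ⊕ G))
    (h1 : ¬ ∃ h : G → List S,
        applyH h (substVar X [] u) = applyH h (substVar X [] (Sum.inl a :: v)))
    (h2 : ¬ ∃ h : G → List S,
        applyH h (Sum.inr X :: substVar X [Sum.inl a, Sum.inr X] u) =
          applyH h (substVar X [Sum.inl a, Sum.inr X] v)) :
    ¬ ∃ h : G → List S, applyH h (Sum.inr X :: u) = applyH h (Sum.inl a :: v) := by
  rintro ⟨h, hh⟩
  rw [applyH_cons_inr, applyH_cons_inl] at hh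
  rcases hX : h X with _ | ⟨b, w⟩
  · refine h1 ⟨h, ?_⟩
    rw [applyH_substVar_of_eq h hX, applyH_substVar_of_eq h hX]
    simpa [hX] using hh
  · rw [hX, List.cons_append, List.cons.injEq] at hh
    obtain ⟨rfl, hw⟩ := hh
    refine h2 ⟨Function.update h X w, ?_⟩
    have hX' : h X = applyH (Function.update h X w) [Sum.inl b, Sum.inr X] := by simp [hX]
    rw [applyH_cons_inr, Function.update_self, applyH_update_substVar h hX',
      applyH_update_substVar h hX', hw]
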